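/- arXiv:2403.05536 — 2 statements merged into one kernel-verified Lean document; each statement's English description precedes it below -/
import Mathlib

section
/- For disjoint subsets A, B of the torus T_n^d and α ∈ [0,d), ∑_{v∈A} ∑_{u∈B} ‖u−v‖^{−α} ≥ max{ |A|·(R_n(α) − R_{|B^c|}(α)), |B|·(R_n(α) − R_{|A^c|}(α)) }, where B^c and A^c denote complements in T_n^d and R_k(α) is the sum of ‖w‖^{−α} over the k vertices closest to the origin. -/
/-!
Fix `v ∈ A`. The translation `u ↦ u - v` maps `B` injectively onto `|B|` nonzero vertices, and
since `‖·‖^{-α}` decreases along the enumeration `e`, the sum over any `k` nonzero vertices is at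
least the sum over the `k` farthest ones, `e (M - k), …, e (M - 1)`. With `k = |B|` this tail sum
dominates `R_n(α) - R_{|Bᶜ|}(α)`; summing over `v ∈ A` gives the first bound, and the second is
symmetric.
-/

open Finset

section RankedSums

variable {β : Type*}

theorem sum_Ico_sub_card_le_sum_of_antitoneOn [AddCommMonoid β] [PartialOrder β]
    [IsOrderedAddMonoid β] {f : ℕ → β} {M : ℕ} {T : Finset ℕ}
    (hf : AntitoneOn f (Set.Iio M)) (hT : T ⊆ range M) :
    ∑ i ∈ Ico (M - #T) M, f i ≤ ∑ i ∈ T, f i := by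
  induction T using Finset.induction_on_max generalizing M with
  | empty => simp
  | insert a s has ih =>
    have haM : a < M := mem_range.1 (hT (mem_insert_self a s))
    have hsM : s ⊆ range (M - 1) := fun x hx => mem_range.2 (by have := has x hx; omega)
    have hIH := ih (hf.mono (Set.Iio_subset_Iio (by omega))) hsM
    have hsplit : ∑ i ∈ Ico (M - (#s + 1)) M, f i =
        ∑ i ∈ Ico (M - 1 - #s) (M - 1), f i + f (M - 1) := by
      rw [show M - (#s + 1) = M - 1 - #s by omega, ← sum_Ico_succ_top (by omega),
        Nat.sub_add_cancel (by omega)]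
    have haS : a ∉ s := fun h => lt_irrefl a (has a h)
    rw [card_insert_of_notMem haS, sum_insert haS, hsplit, add_comm (f a)]
    exact add_le_add hIH (hf (Set.mem_Iio.2 haM) (Set.mem_Iio.2 (by omega)) (by omega))

theorem sum_range_sub_sum_range_le_sum_Ico [AddCommGroup β] [PartialOrder β]
    [IsOrderedAddMonoid β] {f : ℕ → β} (hf : ∀ i, 0 ≤ f i) {L K : ℕ} (hLK : L ≤ K) (M : ℕ) :
    ∑ i ∈ range M, f i - ∑ i ∈ range K, f i ≤ ∑ i ∈ Ico L M, f i := by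
  rcases le_or_gt M K with hMK | hKM
  · calc ∑ i ∈ range M, f i - ∑ i ∈ range K, f i ≤ 0 :=
          sub_nonpos.2 <|
            sum_le_sum_of_subset_of_nonneg (range_subset_range.2 hMK) fun i _ _ => hf i
      _ ≤ ∑ i ∈ Ico L M, f i := sum_nonneg fun i _ => hf i
  · rw [← sum_range_add_sum_Ico f hKM.le, add_sub_cancel_left]
    exact sum_le_sum_of_subset_of_nonneg (Ico_subset_Ico_left hLK) fun i _ _ => hf i

end RankedSums

section Enumeration

variable {V β : Type*} {w : V → β} {e : ℕ → V} {M : ℕ} {S : Finset V}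

theorem sum_eq_sum_range_of_bijOn [AddCommMonoid β] (he : Set.BijOn e (Set.Iio M) S) :
    ∑ v ∈ S, w v = ∑ i ∈ range M, w (e i) := by
  rw [← coe_range] at he
  exact (sum_nbij e (fun i hi => he.mapsTo hi) he.injOn he.surjOn fun _ _ => rfl).symm

theorem sum_Ico_sub_card_le_sum_of_bijOn [DecidableEq V] [AddCommMonoid β] [PartialOrder β]
    [IsOrderedAddMonoid β] (he : Set.BijOn e (Set.Iio M) S)
    (hw : AntitoneOn (w ∘ e) (Set.Iio M)) {C : Finset V} (hC : C ⊆ S) :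
    ∑ i ∈ Ico (M - #C) M, w (e i) ≤ ∑ v ∈ C, w v := by
  set T := (range M).filter (e · ∈ C)
  have hinj : Set.InjOn e T := he.injOn.mono fun i hi => by simpa [T] using (mem_filter.1 hi).1
  have hTC : T.image e = C := by
    ext v
    simp only [mem_image, mem_filter, mem_range, T]
    constructor
    · rintro ⟨i, ⟨-, hi⟩, rfl⟩
      exact hi
    · intro hv
      obtain ⟨i, hi, rfl⟩ := he.surjOn (hC hv)
      exact ⟨i, ⟨hi, hv⟩, rfl⟩
  calc ∑ i ∈ Ico (M - #C) M, w (e i) = ∑ i ∈ Ico (M - #T) M, w (e i) := by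
        rw [← hTC, card_image_of_injOn hinj]
    _ ≤ ∑ i ∈ T, w (e i) := sum_Ico_sub_card_le_sum_of_antitoneOn hw (filter_subset _ _)
    _ = ∑ v ∈ C, w v := by rw [← hTC, sum_image hinj]

theorem sum_sub_sum_range_le_sum_of_bijOn [DecidableEq V] [AddCommGroup β] [PartialOrder β]
    [IsOrderedAddMonoid β] {K : ℕ} {C : Finset V} (hw0 : ∀ v, 0 ≤ w v)
    (he : Set.BijOn e (Set.Iio M) S) (hw : AntitoneOn (w ∘ e) (Set.Iio M)) (hC : C ⊆ S)
    (hK : M - #C ≤ K) :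
    ∑ v ∈ S, w v - ∑ i ∈ range K, w (e i) ≤ ∑ v ∈ C, w v := by
  rw [sum_eq_sum_range_of_bijOn he]
  exact (sum_range_sub_sum_range_le_sum_Ico (fun i => hw0 (e i)) hK M).trans
    (sum_Ico_sub_card_le_sum_of_bijOn he hw hC)

end Enumeration

theorem stmt1_general (N d : ℕ) [NeZero N]
    (nrm : (Fin d → ZMod N) → ℝ)
    (hnrm0 : nrm 0 = 0)
    (hpos : ∀ v : Fin d → ZMod N, v ≠ 0 → 0 < nrm v)
    (M : ℕ) (hM : M = N ^ d - 1)
    (e : ℕ → (Fin d → ZMod N))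
    (hinj : Set.InjOn e (Set.Iio M))
    (hne : ∀ i < M, e i ≠ 0)
    (hsurj : ∀ v : Fin d → ZMod N, v ≠ 0 → ∃ i < M, e i = v)
    (hmono : ∀ i j : ℕ, i ≤ j → j < M → nrm (e i) ≤ nrm (e j))
    (α : ℝ) (hα0 : 0 ≤ α)
    (A B : Finset (Fin d → ZMod N)) (hAB : Disjoint A B) :
    max ((A.card : ℝ) *
          ((∑ v ∈ Finset.univ \ {0}, nrm v ^ (-α)) -
            ∑ i ∈ Finset.range (N ^ d - B.card), nrm (e i) ^ (-α)))
        ((B.card : ℝ) *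
          ((∑ v ∈ Finset.univ \ {0}, nrm v ^ (-α)) -
            ∑ i ∈ Finset.range (N ^ d - A.card), nrm (e i) ^ (-α)))
      ≤ ∑ v ∈ A, ∑ u ∈ B, nrm (u - v) ^ (-α) := by
  have hw0 : ∀ v, 0 ≤ nrm v ^ (-α) := fun v => Real.rpow_nonneg (by
    rcases eq_or_ne v 0 with rfl | hv
    exacts [hnrm0.ge, (hpos v hv).le]) _
  have he : Set.BijOn e (Set.Iio M) ↑(univ \ {0} : Finset (Fin d → ZMod N)) :=
    ⟨fun i hi => by simpa using hne i hi, hinj,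
      fun v hv => by simpa using hsurj v (by simpa using hv)⟩
  have hanti : AntitoneOn (fun i => nrm (e i) ^ (-α)) (Set.Iio M) := fun i hi j hj hij =>
    Real.rpow_le_rpow_of_nonpos (hpos _ (hne i hi)) (hmono i j hij hj) (by linarith)
  have hsum_le : ∀ C ⊆ univ \ {0}, ∑ v ∈ univ \ {0}, nrm v ^ (-α) -
      ∑ i ∈ range (N ^ d - #C), nrm (e i) ^ (-α) ≤ ∑ v ∈ C, nrm v ^ (-α) := fun C hC =>
    sum_sub_sum_range_le_sum_of_bijOn (w := fun v => nrm v ^ (-α)) hw0 he hanti hC (by omega)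
  have hne_of_mem {u v} (hu : u ∈ B) (hv : v ∈ A) : u - v ≠ 0 :=
    sub_ne_zero.2 fun h => disjoint_left.1 hAB hv (h ▸ hu)
  refine max_le ?_ ?_
  · rw [← nsmul_eq_mul]
    refine card_nsmul_le_sum _ _ _ fun v hv => ?_
    simpa using hsum_le (B.map (Equiv.subRight v).toEmbedding) fun _ hu => by
      obtain ⟨u, hu', rfl⟩ := mem_map.1 hu
      simpa using hne_of_mem hu' hv
  · rw [← nsmul_eq_mul, sum_comm]
    refine card_nsmul_le_sum _ _ _ fun u hu => ?_
    simpa using hsum_le (A.map (Equiv.subLeft u).toEmbedding) fun _ hv => by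
      obtain ⟨v, hv', rfl⟩ := mem_map.1 hv
      simpa using hne_of_mem hu hv'

/-- lower bound on the sum of inverse-power distances between two
disjoint subsets of the torus. -/
theorem stmt1 (N d : ℕ) [NeZero N]
    (nrm : (Fin d → ZMod N) → ℝ)
    (hnrm0 : nrm 0 = 0)
    (hpos : ∀ v : Fin d → ZMod N, v ≠ 0 → 0 < nrm v)
    (M : ℕ) (hM : M = N ^ d - 1)
    (e : ℕ → (Fin d → ZMod N))
    (hinj : Set.InjOn e (Set.Iio M))
    (hne : ∀ i < M, e i ≠ 0)
    (hsurj : ∀ v : Fin d → ZMod N, v ≠ 0 → ∃ i < M, e i = v)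
    (hmono : ∀ i j : ℕ, i ≤ j → j < M → nrm (e i) ≤ nrm (e j))
    (hpad : ∀ i : ℕ, M ≤ i → e i = 0)
    (α : ℝ) (hα0 : 0 ≤ α) (hαd : α < d)
    (A B : Finset (Fin d → ZMod N)) (hAB : Disjoint A B) :
    max ((A.card : ℝ) *
          ((∑ v ∈ Finset.univ \ {0}, nrm v ^ (-α)) -
            ∑ i ∈ Finset.range (N ^ d - B.card), nrm (e i) ^ (-α)))
        ((B.card : ℝ) *
          ((∑ v ∈ Finset.univ \ {0}, nrm v ^ (-α)) -
            ∑ i ∈ Finset.range (N ^ d - A.card), nrm (e i) ^ (-α)))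
      ≤ ∑ v ∈ A, ∑ u ∈ B, nrm (u - v) ^ (-α) :=
  stmt1_general N d nrm hnrm0 hpos M hM e hinj hne hsurj hmono α hα0 A B hAB
end

section
/- Let α : N → [0,d) satisfy sup_n α(n) < d. Then there exist constants 0 < c̲ < c̄ < ∞ such that for all j, n ∈ N, c̲ ≤ R_j(α(n)) / j^{1−α(n)/d} ≤ c̄, where R_j(α) is the sum of the inverse α-th powers of distances of the j closest nonzero lattice points to the origin. -/
/-!
The sup norm of a nonzero integer vector is a positive integer `m`, and exactly
`(2m + 1)^d - 1` nonzero lattice points have norm at most `m`. Comparing these counts with an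
enumeration by nondecreasing norm gives `‖v i‖^d ≤ i + 1 ≤ (3‖v i‖)^d`, so that
`‖v i‖^(-α)` lies between `(i + 1)^(-α/d)` and `3^α (i + 1)^(-α/d)`. The partial sums of
`(i + 1)^(-β)` for `0 ≤ β < 1` lie between `j^(1-β)` and `j^(1-β) / (1 - β)`, the upper bound by
telescoping Bernoulli's inequality; both constants stay bounded as long as `α ≤ b < d`.
-/

open Finset

lemma mul_add_one_rpow_sub_one_le {p x : ℝ} (hp0 : 0 ≤ p) (hp1 : p ≤ 1) (hx : 0 ≤ x) :
    p * (x + 1) ^ (p - 1) ≤ (x + 1) ^ p - x ^ p := by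
  have hx1 : 0 < x + 1 := by linarith
  have hs : -1 ≤ -(x + 1)⁻¹ := neg_le_neg (inv_le_one_of_one_le₀ (by linarith))
  have bernoulli := rpow_one_add_le_one_add_mul_self hs hp0 hp1
  have hfrac : 1 + -(x + 1)⁻¹ = x / (x + 1) := by field_simp; ring
  rw [hfrac, Real.div_rpow hx hx1.le, div_le_iff₀ (by positivity)] at bernoulli
  rw [Real.rpow_sub_one hx1.ne', div_eq_mul_inv]
  nlinarith

lemma mul_sum_rpow_sub_one_le {p : ℝ} (hp0 : 0 < p) (hp1 : p ≤ 1) (j : ℕ) :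
    p * ∑ i ∈ range j, ((i : ℝ) + 1) ^ (p - 1) ≤ (j : ℝ) ^ p :=
  calc p * ∑ i ∈ range j, ((i : ℝ) + 1) ^ (p - 1)
      ≤ ∑ i ∈ range j, (((i + 1 : ℕ) : ℝ) ^ p - ((i : ℕ) : ℝ) ^ p) := by
        rw [mul_sum]
        gcongr with i
        push_cast
        exact mul_add_one_rpow_sub_one_le hp0.le hp1 i.cast_nonneg
    _ = (j : ℝ) ^ p := by
        rw [sum_range_sub (fun i : ℕ => (i : ℝ) ^ p)]
        simp [Real.zero_rpow hp0.ne']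

lemma rpow_rpow_div_neg {a d : ℝ} (ha : 0 ≤ a) (hd : d ≠ 0) (α : ℝ) :
    (a ^ d) ^ (-(α / d)) = a ^ (-α) := by
  rw [← Real.rpow_mul ha, mul_neg, mul_div_cancel₀ α hd]

section RpowSums

variable {d α : ℝ} (hd : 0 < d) (hα : 0 ≤ α) {a : ℕ → ℝ} (ha : ∀ i, 0 < a i)
include hd hα ha

lemma rpow_one_sub_div_le_sum_rpow_neg (hle : ∀ i : ℕ, a i ^ d ≤ i + 1) {j : ℕ} (hj : 0 < j) :
    (j : ℝ) ^ (1 - α / d) ≤ ∑ i ∈ range j, a i ^ (-α) := by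
  have hterm : ∀ i ∈ range j, (j : ℝ) ^ (-(α / d)) ≤ a i ^ (-α) := fun i hi => by
    have hij : (i : ℝ) + 1 ≤ j := by exact_mod_cast mem_range.1 hi
    rw [← rpow_rpow_div_neg (ha i).le hd.ne']
    exact Real.rpow_le_rpow_of_nonpos (by have := ha i; positivity) ((hle i).trans hij)
      (neg_nonpos.2 (div_nonneg hα hd.le))
  calc (j : ℝ) ^ (1 - α / d) = #(range j) • (j : ℝ) ^ (-(α / d)) := by
        rw [card_range, nsmul_eq_mul, sub_eq_add_neg, Real.rpow_add (Nat.cast_pos.2 hj),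
          Real.rpow_one]
    _ ≤ ∑ i ∈ range j, a i ^ (-α) := card_nsmul_le_sum _ _ _ hterm

lemma sum_rpow_neg_le (hαd : α < d) {C : ℝ} (hC : 0 < C)
    (hge : ∀ i : ℕ, (i : ℝ) + 1 ≤ (C * a i) ^ d) (j : ℕ) :
    ∑ i ∈ range j, a i ^ (-α) ≤ C ^ α / (1 - α / d) * (j : ℝ) ^ (1 - α / d) := by
  have hp : 0 < 1 - α / d := sub_pos.2 ((div_lt_one hd).2 hαd)
  have hterm : ∀ i ∈ range j, a i ^ (-α) ≤ C ^ α * ((i : ℝ) + 1) ^ (1 - α / d - 1) :=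
    fun i _ => by
      have hCa : (C * a i) ^ (-α) ≤ ((i : ℝ) + 1) ^ (-(α / d)) := by
        rw [← rpow_rpow_div_neg (mul_pos hC (ha i)).le hd.ne']
        exact Real.rpow_le_rpow_of_nonpos (by positivity) (hge i)
          (neg_nonpos.2 (div_nonneg hα hd.le))
      rw [Real.mul_rpow hC.le (ha i).le, Real.rpow_neg hC.le,
        inv_mul_le_iff₀ (by positivity)] at hCa
      rwa [sub_sub_cancel_left]
  calc ∑ i ∈ range j, a i ^ (-α)
      ≤ C ^ α * ∑ i ∈ range j, ((i : ℝ) + 1) ^ (1 - α / d - 1) := by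
        rw [mul_sum]; exact sum_le_sum hterm
    _ ≤ C ^ α / (1 - α / d) * (j : ℝ) ^ (1 - α / d) := by
        rw [div_mul_eq_mul_div, le_div_iff₀ hp, mul_assoc]
        gcongr
        rw [mul_comm]
        exact mul_sum_rpow_sub_one_le hp (by linarith [div_nonneg hα hd.le]) j

end RpowSums

section Enumeration

variable {X : Type*} {N : X → ℝ} {v : ℕ → X}

lemma succ_le_card_of_le (hinj : Function.Injective v) (hmono : Monotone fun i => N (v i))
    {s : Finset X} {r : ℝ} (hs : ∀ k, N (v k) ≤ r → v k ∈ s) {i : ℕ} (hi : N (v i) ≤ r) :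
    i + 1 ≤ #s := by
  classical
  have hsub : (range (i + 1)).image v ⊆ s := by
    simp only [subset_iff, mem_image, mem_range]
    rintro _ ⟨k, hk, rfl⟩
    exact hs k ((hmono (Nat.lt_succ_iff.1 hk)).trans hi)
  simpa [card_image_of_injective _ hinj] using card_le_card hsub

lemma card_le_of_lt (hmono : Monotone fun i => N (v i)) {s : Finset X} {r : ℝ}
    (hs : ∀ x ∈ s, x ∈ Set.range v ∧ N x ≤ r) {i : ℕ} (hi : r < N (v i)) : #s ≤ i := by
  classical
  have hsub : s ⊆ (range i).image v := by
    intro x hx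
    obtain ⟨⟨k, rfl⟩, hk⟩ := hs x hx
    exact mem_image_of_mem v (mem_range.2 (hmono.reflect_lt (hk.trans_lt hi)))
  simpa using (card_le_card hsub).trans card_image_le

end Enumeration

section Lattice

variable {d : ℕ}

lemma exists_natCast_eq_norm (x : Fin d → ℤ) : ∃ m : ℕ, ‖fun k => (x k : ℝ)‖ = m := by
  refine ⟨univ.sup fun k => (x k).natAbs, le_antisymm ?_ ?_⟩
  · refine pi_norm_le_iff_of_nonneg (by positivity) |>.2 fun k => ?_
    rw [Real.norm_eq_abs, ← Int.cast_abs, Int.abs_eq_natAbs]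
    exact_mod_cast le_sup (f := fun k => (x k).natAbs) (mem_univ k)
  · rcases isEmpty_or_nonempty (Fin d) with h | h
    · simp
    obtain ⟨k, -, hk⟩ := exists_mem_eq_sup univ univ_nonempty fun k => (x k).natAbs
    rw [hk]
    refine le_trans ?_ (norm_le_pi_norm (fun k => (x k : ℝ)) k)
    rw [Real.norm_eq_abs, ← Int.cast_abs, Int.abs_eq_natAbs]
    rfl

lemma one_le_norm_intCast {x : Fin d → ℤ} (hx : x ≠ 0) : 1 ≤ ‖fun k => (x k : ℝ)‖ := by
  obtain ⟨k, hk⟩ := Function.ne_iff.1 hx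
  calc (1 : ℝ) ≤ ‖(x k : ℝ)‖ := by
        rw [Int.norm_cast_real, Int.norm_eq_abs]; exact_mod_cast Int.one_le_abs hk
    _ ≤ _ := norm_le_pi_norm (fun k => (x k : ℝ)) k

noncomputable def puncturedBox (d m : ℕ) : Finset (Fin d → ℤ) :=
  (Fintype.piFinset fun _ => Icc (-(m : ℤ)) m).erase 0

lemma mem_puncturedBox {m : ℕ} {x : Fin d → ℤ} :
    x ∈ puncturedBox d m ↔ x ≠ 0 ∧ ‖fun k => (x k : ℝ)‖ ≤ m := by
  simp only [puncturedBox, mem_erase, Fintype.mem_piFinset, mem_Icc, ← abs_le,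
    pi_norm_le_iff_of_nonneg (Nat.cast_nonneg m), Real.norm_eq_abs, ← Int.cast_abs]
  norm_cast

lemma card_puncturedBox (d m : ℕ) : #(puncturedBox d m) = (2 * m + 1) ^ d - 1 := by
  rw [puncturedBox, card_erase_of_mem (by simp), Fintype.card_piFinset]
  simp only [Int.card_Icc, prod_const, card_univ, Fintype.card_fin]
  congr 2
  omega

variable {v : ℕ → (Fin d → ℤ)} (hne : ∀ i, v i ≠ 0)
  (hmono : Monotone fun i => ‖fun k => (v i k : ℝ)‖)
include hne hmono

lemma norm_pow_le_succ (hsurj : ∀ x : Fin d → ℤ, x ≠ 0 → ∃ i, v i = x) (i : ℕ) :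
    ‖fun k => (v i k : ℝ)‖ ^ d ≤ i + 1 := by
  obtain ⟨m, hm⟩ := exists_natCast_eq_norm (v i)
  have hm1 : 1 ≤ m := by exact_mod_cast hm ▸ one_le_norm_intCast (hne i)
  have hcard : #(puncturedBox d (m - 1)) ≤ i := by
    refine card_le_of_lt (N := fun x => ‖fun k => (x k : ℝ)‖) hmono (r := (m - 1 : ℕ))
      (fun x hx => ?_) ?_
    · rw [mem_puncturedBox] at hx
      obtain ⟨j, rfl⟩ := hsurj x hx.1
      exact ⟨⟨j, rfl⟩, hx.2⟩
    · rw [hm]; exact_mod_cast Nat.sub_lt hm1 one_pos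
  rw [card_puncturedBox] at hcard
  have : m ^ d ≤ i + 1 := calc
    m ^ d ≤ (2 * (m - 1) + 1) ^ d := Nat.pow_le_pow_left (by omega) d
    _ ≤ i + 1 := by have := Nat.one_le_pow d _ (by omega : 0 < 2 * (m - 1) + 1); omega
  rw [hm]; exact_mod_cast this

lemma succ_le_three_mul_norm_pow (hinj : Function.Injective v) (i : ℕ) :
    (i : ℝ) + 1 ≤ (3 * ‖fun k => (v i k : ℝ)‖) ^ d := by
  obtain ⟨m, hm⟩ := exists_natCast_eq_norm (v i)
  have hm1 : 1 ≤ m := by exact_mod_cast hm ▸ one_le_norm_intCast (hne i)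
  have hcard : i + 1 ≤ #(puncturedBox d m) :=
    succ_le_card_of_le (N := fun x => ‖fun k => (x k : ℝ)‖) hinj hmono
      (fun k hk => mem_puncturedBox.2 ⟨hne k, hk⟩) hm.le
  rw [card_puncturedBox] at hcard
  have : i + 1 ≤ (3 * m) ^ d := calc
    i + 1 ≤ (2 * m + 1) ^ d := hcard.trans (Nat.sub_le _ _)
    _ ≤ (3 * m) ^ d := Nat.pow_le_pow_left (by omega) d
  rw [hm]; exact_mod_cast this

end Lattice

theorem stmt2_general (d : ℕ)
    (v : ℕ → (Fin d → ℤ))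
    (hinj : Function.Injective v)
    (hne : ∀ i, v i ≠ 0)
    (hsurj : ∀ x : Fin d → ℤ, x ≠ 0 → ∃ i, v i = x)
    (hmono : Monotone fun i => ‖((fun k => (v i k : ℝ)) : Fin d → ℝ)‖)
    (α : ℕ → ℝ) (hα0 : ∀ n, 0 ≤ α n)
    (hαd : ∃ b : ℝ, b < d ∧ ∀ n, α n ≤ b) :
    ∃ clo chi : ℝ, 0 < clo ∧ clo < chi ∧
      ∀ j n : ℕ, 1 ≤ j →
        clo ≤ (∑ i ∈ Finset.range j, ‖((fun k => (v i k : ℝ)) : Fin d → ℝ)‖ ^ (-(α n)))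
                / (j : ℝ) ^ (1 - α n / d) ∧
        (∑ i ∈ Finset.range j, ‖((fun k => (v i k : ℝ)) : Fin d → ℝ)‖ ^ (-(α n)))
                / (j : ℝ) ^ (1 - α n / d) ≤ chi := by
  obtain ⟨b, hbd, hαb⟩ := hαd
  have hd : (0 : ℝ) < d := Nat.cast_pos.2 <| Nat.pos_of_ne_zero fun h =>
    hne 0 (by subst h; exact Subsingleton.elim _ _)
  have hb : 0 < 1 - b / d := sub_pos.2 ((div_lt_one hd).2 hbd)
  have hpos i : 0 < ‖fun k => (v i k : ℝ)‖ := one_pos.trans_le (one_le_norm_intCast (hne i))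
  have hle (i : ℕ) : ‖fun k => (v i k : ℝ)‖ ^ (d : ℝ) ≤ i + 1 := by
    rw [Real.rpow_natCast]; exact norm_pow_le_succ hne hmono hsurj i
  have hge (i : ℕ) : (i : ℝ) + 1 ≤ (3 * ‖fun k => (v i k : ℝ)‖) ^ (d : ℝ) := by
    rw [Real.rpow_natCast]; exact succ_le_three_mul_norm_pow hne hmono hinj i
  have hK : 0 < (3 : ℝ) ^ b / (1 - b / d) := by positivity
  refine ⟨1, 3 ^ b / (1 - b / d) + 1, one_pos, by linarith, fun j n hj => ?_⟩
  have hjp : (0 : ℝ) < (j : ℝ) ^ (1 - α n / d) := by positivity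
  constructor
  · rw [le_div_iff₀ hjp, one_mul]
    exact rpow_one_sub_div_le_sum_rpow_neg hd (hα0 n) hpos hle hj
  · have hαn := hαb n
    rw [div_le_iff₀ hjp]
    calc _ ≤ 3 ^ α n / (1 - α n / d) * (j : ℝ) ^ (1 - α n / d) :=
          sum_rpow_neg_le hd (hα0 n) hpos (hαn.trans_lt hbd) three_pos hge j
      _ ≤ 3 ^ b / (1 - b / d) * (j : ℝ) ^ (1 - α n / d) := by gcongr; norm_num
      _ ≤ (3 ^ b / (1 - b / d) + 1) * (j : ℝ) ^ (1 - α n / d) := by gcongr; linarith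

/-- uniform two-sided polynomial bounds on `R_j(α(n))` for exponents
bounded away from `d`, where the nonzero lattice points of `ℤ^d` are enumerated in
increasing order of distance to the origin. -/
theorem stmt2 (d : ℕ) (hd : 0 < d)
    (v : ℕ → (Fin d → ℤ))
    (hinj : Function.Injective v)
    (hne : ∀ i, v i ≠ 0)
    (hsurj : ∀ x : Fin d → ℤ, x ≠ 0 → ∃ i, v i = x)
    (hmono : Monotone fun i => ‖((fun k => (v i k : ℝ)) : Fin d → ℝ)‖)
    (α : ℕ → ℝ) (hα0 : ∀ n, 0 ≤ α n)
    (hαd : ∃ b : ℝ, b < d ∧ ∀ n, α n ≤ b) :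
    ∃ clo chi : ℝ, 0 < clo ∧ clo < chi ∧
      ∀ j n : ℕ, 1 ≤ j →
        clo ≤ (∑ i ∈ Finset.range j, ‖((fun k => (v i k : ℝ)) : Fin d → ℝ)‖ ^ (-(α n)))
                / (j : ℝ) ^ (1 - α n / d) ∧
        (∑ i ∈ Finset.range j, ‖((fun k => (v i k : ℝ)) : Fin d → ℝ)‖ ^ (-(α n)))
                / (j : ℝ) ^ (1 - α n / d) ≤ chi :=
  stmt2_general d v hinj hne hsurj hmono α hα0 hαd
end
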